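/- Let ℓ be a prime number, let n and m be natural numbers, and let F be a finite abelian ℓ-group. Let A be a finite subquotient of (ℚ_ℓ/ℤ_ℓ)^n ⊕ F (that is, A is a quotient group of a subgroup of (ℚ_ℓ/ℤ_ℓ)^n ⊕ F). If every element of A is annihilated by ℓ^m, then the order of A divides ℓ^{m·n} multiplied by the order of F[ℓ^m]. -/

import Mathlib

/-!
Every element of `(ℚ_ℓ/ℤ_ℓ)^n ⊕ F` has finite order, so the finitely many preimages of the
elements of `A` generate a finite subgroup `T` that still surjects onto `A`. Since `ℓ^m` kills `A`,
`A` is a quotient of `T / ℓ^m T`, whose order equals that of the kernel `T[ℓ^m]` of multiplication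
by `ℓ^m`. Finally `T[ℓ^m]` is a subgroup of `(ℚ_ℓ/ℤ_ℓ)[ℓ^m]^n ⊕ F[ℓ^m]`, and `(ℚ_ℓ/ℤ_ℓ)[ℓ^m]` is
cyclic, generated by the class of `ℓ^{-m}`.
-/

open QuotientAddGroup

section NsmulKernel

variable {G H A : Type*} [AddCommGroup G] [AddCommGroup H] [AddCommGroup A]

theorem card_dvd_card_nsmul_eq_zero_of_finite [Finite G] {N : ℕ} (φ : G →+ A)
    (hφ : Function.Surjective φ) (hA : ∀ a : A, N • a = 0) :
    Nat.card A ∣ Nat.card {x : G // N • x = 0} := by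
  have hle : (nsmulAddMonoidHom N : G →+ G).range ≤ φ.ker := by
    rintro _ ⟨x, rfl⟩
    simp [hA]
  calc Nat.card A = φ.ker.index := by
        rw [AddSubgroup.index_ker, φ.range_eq_top.2 hφ, AddSubgroup.card_top]
    _ ∣ (nsmulAddMonoidHom N : G →+ G).range.index := AddSubgroup.index_dvd_of_le hle
    _ = Nat.card {x : G // N • x = 0} := AddSubgroup.index_range

theorem card_nsmul_eq_zero_dvd_of_injective {f : H →+ G} (hf : Function.Injective f) (N : ℕ) :
    Nat.card {x : H // N • x = 0} ∣ Nat.card {x : G // N • x = 0} := by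
  have hle : (nsmulAddMonoidHom N : H →+ H).ker.map f ≤ (nsmulAddMonoidHom N : G →+ G).ker := by
    rintro _ ⟨x, hx, rfl⟩
    have hx : N • x = 0 := hx
    change N • f x = 0
    rw [← map_nsmul, hx, map_zero]
  change Nat.card (nsmulAddMonoidHom N : H →+ H).ker ∣ Nat.card (nsmulAddMonoidHom N : G →+ G).ker
  rw [← AddSubgroup.card_map_of_injective hf]
  exact AddSubgroup.card_dvd_of_le hle

theorem card_dvd_card_nsmul_eq_zero_of_isAddTorsion [Finite A] (hG : IsAddTorsion G) {N : ℕ}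
    (φ : G →+ A) (hφ : Function.Surjective φ) (hA : ∀ a : A, N • a = 0) :
    Nat.card A ∣ Nat.card {x : G // N • x = 0} := by
  let T := AddSubgroup.closure (Set.range (Function.surjInv hφ))
  have : Finite T := AddCommGroup.finite_of_fg_isAddTorsion T (hG.addSubgroup T)
  have hT : Function.Surjective (φ.comp T.subtype) := fun a =>
    ⟨⟨_, AddSubgroup.subset_closure ⟨a, rfl⟩⟩, Function.surjInv_eq hφ a⟩
  exact (card_dvd_card_nsmul_eq_zero_of_finite _ hT hA).trans
    (card_nsmul_eq_zero_dvd_of_injective T.subtype_injective N)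

theorem card_nsmul_eq_zero_prod (N : ℕ) :
    Nat.card {x : G × H // N • x = 0} =
      Nat.card {x : G // N • x = 0} * Nat.card {y : H // N • y = 0} := by
  rw [← Nat.card_prod]
  exact Nat.card_congr <| (Equiv.subtypeEquivRight fun _ => Prod.ext_iff).trans
    (Equiv.subtypeProdEquivProd (p := fun x : G => N • x = 0) (q := fun y : H => N • y = 0))

theorem card_nsmul_eq_zero_fun (ι : Type*) [Finite ι] (N : ℕ) :
    Nat.card {x : ι → G // N • x = 0} = Nat.card {x : G // N • x = 0} ^ Nat.card ι := by
  rw [← Nat.card_fun]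
  exact Nat.card_congr <| (Equiv.subtypeEquivRight fun _ => funext_iff).trans
    (Equiv.subtypePiEquivPi (β := fun _ : ι => G) (p := fun _ x => N • x = 0))

end NsmulKernel

abbrev QpModZp (p : ℕ) [Fact p.Prime] : Type := ℚ_[p] ⧸ (PadicInt.subring p).toAddSubgroup

namespace QpModZp

variable {p : ℕ} [Fact p.Prime]

theorem mk_eq_zero_iff {x : ℚ_[p]} : (mk x : QpModZp p) = 0 ↔ ‖x‖ ≤ 1 :=
  (eq_zero_iff x).trans (PadicInt.mem_subring_iff p)

theorem pow_nsmul_mk_eq_zero_iff {x : ℚ_[p]} {k : ℕ} :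
    p ^ k • (mk x : QpModZp p) = 0 ↔ ‖x‖ ≤ p ^ k := by
  rw [← mk_nsmul, mk_eq_zero_iff, nsmul_eq_mul, norm_mul, Nat.cast_pow, norm_pow, Padic.norm_p,
    inv_pow, ← div_eq_inv_mul, div_le_one (pow_pos (Nat.cast_pos.2 (Fact.out : p.Prime).pos) k)]

theorem isOfFinAddOrder (d : QpModZp p) : IsOfFinAddOrder d := by
  obtain ⟨x, rfl⟩ := mk_surjective d
  obtain ⟨k, hk⟩ := pow_unbounded_of_one_lt ‖x‖ (Nat.one_lt_cast.2 (Fact.out : p.Prime).one_lt)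
  exact isOfFinAddOrder_iff_nsmul_eq_zero.2
    ⟨p ^ k, pow_pos (Fact.out : p.Prime).pos k, pow_nsmul_mk_eq_zero_iff.2 hk.le⟩

theorem pow_nsmul_mk_inv_pow (k : ℕ) : p ^ k • (mk ((p : ℚ_[p]) ^ k)⁻¹ : QpModZp p) = 0 := by
  rw [pow_nsmul_mk_eq_zero_iff, norm_inv, norm_pow, Padic.norm_p, inv_pow, inv_inv]

theorem pow_nsmul_eq_zero_iff_mem_zmultiples {d : QpModZp p} {k : ℕ} :
    p ^ k • d = 0 ↔ d ∈ AddSubgroup.zmultiples (mk ((p : ℚ_[p]) ^ k)⁻¹) := by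
  constructor
  · obtain ⟨x, rfl⟩ := mk_surjective d
    intro hx
    rw [← mk_nsmul, mk_eq_zero_iff, nsmul_eq_mul, Nat.cast_pow] at hx
    let z : ℤ_[p] := ⟨p ^ k * x, (PadicInt.mem_subring_iff p).2 hx⟩
    -- `appr` provides an integer `a` with `p^k x ≡ a mod p^k ℤ_p`, i.e. `x - a p^{-k} ∈ ℤ_p`.
    obtain ⟨c, hc⟩ := Ideal.mem_span_singleton'.1 (PadicInt.appr_spec k z)
    refine ⟨(z.appr k : ℤ), ?_⟩
    change (z.appr k : ℤ) • (mk _ : QpModZp p) = mk x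
    replace hc : (c : ℚ_[p]) * p ^ k = p ^ k * x - z.appr k := by
      have h := congrArg ((↑) : ℤ_[p] → ℚ_[p]) hc
      push_cast [PadicInt.coe_sub] at h
      exact h
    have hpk : (p : ℚ_[p]) ^ k ≠ 0 :=
      pow_ne_zero k (Nat.cast_ne_zero.2 (Fact.out : p.Prime).ne_zero)
    have hdiff : -((z.appr k : ℤ) • ((p : ℚ_[p]) ^ k)⁻¹) + x = c := by
      rw [zsmul_eq_mul]
      field_simp
      push_cast
      linear_combination -hc
    rw [← mk_zsmul, QuotientAddGroup.eq, hdiff]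
    exact (PadicInt.mem_subring_iff p).2 c.norm_le_one
  · rintro ⟨j, rfl⟩
    rw [smul_comm, pow_nsmul_mk_inv_pow, smul_zero]

theorem card_pow_nsmul_eq_zero_dvd (k : ℕ) :
    Nat.card {d : QpModZp p // p ^ k • d = 0} ∣ p ^ k := by
  rw [Nat.card_congr (Equiv.subtypeEquivRight fun _ => pow_nsmul_eq_zero_iff_mem_zmultiples),
    Nat.card_zmultiples]
  exact addOrderOf_dvd_of_nsmul_eq_zero (pow_nsmul_mk_inv_pow k)

end QpModZp

theorem stmt_0_general (ℓ : ℕ) [Fact ℓ.Prime] (n m : ℕ)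
    (F : Type) [AddCommGroup F] [Finite F]
    (A : Type) [AddCommGroup A] [Finite A]
    (S : AddSubgroup ((Fin n → ℚ_[ℓ] ⧸ (PadicInt.subring ℓ).toAddSubgroup) × F))
    (φ : S →+ A) (hφ : Function.Surjective φ)
    (hA : ∀ a : A, ℓ ^ m • a = 0) :
    Nat.card A ∣ ℓ ^ (m * n) * Nat.card {x : F // ℓ ^ m • x = 0} := by
  have hG : IsAddTorsion ((Fin n → QpModZp ℓ) × F) := fun g =>
    (IsOfFinAddOrder.pi fun i => QpModZp.isOfFinAddOrder (g.1 i)).prod_mk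
      (isOfFinAddOrder_of_finite g.2)
  calc Nat.card A ∣ Nat.card {x : S // ℓ ^ m • x = 0} :=
        card_dvd_card_nsmul_eq_zero_of_isAddTorsion (hG.addSubgroup S) φ hφ hA
    _ ∣ Nat.card {x : (Fin n → QpModZp ℓ) × F // ℓ ^ m • x = 0} :=
        card_nsmul_eq_zero_dvd_of_injective S.subtype_injective _
    _ = Nat.card {d : QpModZp ℓ // ℓ ^ m • d = 0} ^ n * Nat.card {x : F // ℓ ^ m • x = 0} := by
        rw [card_nsmul_eq_zero_prod, card_nsmul_eq_zero_fun, Nat.card_fin]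
    _ ∣ ℓ ^ (m * n) * Nat.card {x : F // ℓ ^ m • x = 0} := by
        rw [pow_mul]
        exact mul_dvd_mul_right (pow_dvd_pow_of_dvd (QpModZp.card_pow_nsmul_eq_zero_dvd m) n) _

/-- Lemme 1.2 : Let `ℓ` be a prime, `n m : ℕ`, `F` a finite abelian `ℓ`-group.
If `A` is a finite subquotient of `(ℚ_ℓ/ℤ_ℓ)^n ⊕ F` annihilated by `ℓ^m`,
then the order of `A` divides `ℓ^{m·n} · |F[ℓ^m]|`. -/
theorem stmt_0 (ℓ : ℕ) [Fact ℓ.Prime] (n m : ℕ)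
    (F : Type) [AddCommGroup F] [Finite F]
    (hF : ∀ x : F, ∃ k : ℕ, ℓ ^ k • x = 0)
    (A : Type) [AddCommGroup A] [Finite A]
    (S : AddSubgroup ((Fin n → ℚ_[ℓ] ⧸ (PadicInt.subring ℓ).toAddSubgroup) × F))
    (φ : S →+ A) (hφ : Function.Surjective φ)
    (hA : ∀ a : A, ℓ ^ m • a = 0) :
    Nat.card A ∣ ℓ ^ (m * n) * Nat.card {x : F // ℓ ^ m • x = 0} :=
  stmt_0_general ℓ n m F A S φ hφ hA
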